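/- arXiv:2408.03179 — 4 statements merged into one kernel-verified Lean document; each statement's English description precedes it below -/
import Mathlib

section
/- Let W = {(W_i, ω_i)}_{i∈I} be a fusion Riesz basis for an infinite-dimensional Hilbert space H with |I| > 2, such that W⊥ = {(W_i⊥, ω_i)}_{i∈I} is a fusion frame. Then e(W⊥) = ∞. -/
noncomputable section
open scoped ENNReal

/-- `W = {(W i, ω i)}` is a fusion frame for `H`. -/
def IsFusionFrame {H : Type} [NormedAddCommGroup H] [InnerProductSpace ℂ H]
    {ι : Type} (W : ι → Submodule ℂ H) [∀ i, Submodule.HasOrthogonalProjection (W i)]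
    (ω : ι → ℝ) : Prop :=
  (∀ i, 0 < ω i) ∧ ∃ A B : ℝ, 0 < A ∧ A ≤ B ∧ ∀ f : H,
    (A * ‖f‖ ^ 2 ≤ ∑' i, ω i ^ 2 * ‖(Submodule.orthogonalProjectionOnto (W i) f : H)‖ ^ 2) ∧
    (∑' i, ω i ^ 2 * ‖(Submodule.orthogonalProjectionOnto (W i) f : H)‖ ^ 2 ≤ B * ‖f‖ ^ 2)

/-- `W = {(W i, ω i)}` is a fusion Riesz basis for `H`. -/
def IsFusionRieszBasis {H : Type} [NormedAddCommGroup H] [InnerProductSpace ℂ H]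
    {ι : Type} (W : ι → Submodule ℂ H) (ω : ι → ℝ) : Prop :=
  (∀ i, 0 < ω i) ∧ (⨆ i, W i).topologicalClosure = ⊤ ∧
  ∃ C D : ℝ, 0 < C ∧ C ≤ D ∧ ∀ (s : Finset ι) (f : ∀ i, W i),
    (C * ∑ j ∈ s, ‖(f j : H)‖ ^ 2 ≤ ‖∑ j ∈ s, ω j • (f j : H)‖ ^ 2) ∧
    (‖∑ j ∈ s, ω j • (f j : H)‖ ^ 2 ≤ D * ∑ j ∈ s, ‖(f j : H)‖ ^ 2)

/-!
Pick indices `a ≠ b` for which `N = span {W i | i ≠ a, b}` is infinite-dimensional: if some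
`W c` is infinite-dimensional, take `a`, `b` distinct from `c`; otherwise `W a + W b` is
finite-dimensional and `N` cannot be, since `H` is the closure of `W a + W b + N`.
The lower Riesz bound gives `‖z‖ ≲ ‖z - u‖` for `z ∈ N` and `u ∈ W a + W b`, so `N` meets
`M = closure (W a + W b)` only in `0`, and the projection onto `Mᗮ = (W a)ᗮ ⊓ (W b)ᗮ` embeds `N`
into `Mᗮ`. Finally every `v ∈ (W a)ᗮ ⊓ (W b)ᗮ` yields the element of the kernel of the synthesis
operator with entry `v` at `a`, entry `-(ω a / ω b) • v` at `b` and `0` elsewhere.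
-/

universe u

theorem Submodule.exists_finset_subset_of_mem_biSup {R M ι : Type*} [Semiring R]
    [AddCommMonoid M] [Module R M] {p : ι → Submodule R M} {A : Set ι} {x : M}
    (hx : x ∈ ⨆ i ∈ A, p i) : ∃ s : Finset ι, ↑s ⊆ A ∧ x ∈ ⨆ i ∈ s, p i := by
  classical
  obtain ⟨s, hs⟩ := Submodule.exists_finset_of_mem_iSup _ hx
  refine ⟨s.filter (· ∈ A), fun i hi => (Finset.mem_filter.1 hi).2, ?_⟩
  simpa only [Finset.mem_filter, iSup_and] using hs

section FusionRieszBasis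

variable {H : Type} [NormedAddCommGroup H] [InnerProductSpace ℂ H] {ι : Type}
  {W : ι → Submodule ℂ H} {ω : ι → ℝ}

theorem IsFusionRieszBasis.exists_pos_mul_norm_sq_le_norm_sub_sq (hW : IsFusionRieszBasis W ω) :
    ∃ c > 0, ∀ s t : Finset ι, Disjoint s t → ∀ z ∈ ⨆ i ∈ s, W i, ∀ u ∈ ⨆ i ∈ t, W i,
      c * ‖z‖ ^ 2 ≤ ‖z - u‖ ^ 2 := by
  classical
  obtain ⟨hω, -, C, D, hC, hCD, hRiesz⟩ := hW
  have hD : 0 < D := hC.trans_le hCD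
  refine ⟨C / D, div_pos hC hD, fun s t hst z hz u hu => ?_⟩
  obtain ⟨μ, rfl⟩ := (Submodule.mem_iSup_finset_iff_exists_sum W z).1 hz
  obtain ⟨ν, rfl⟩ := (Submodule.mem_iSup_finset_iff_exists_sum W u).1 hu
  let f : ∀ i, W i := fun i => (ω i)⁻¹ • if i ∈ s then μ i else -ν i
  have hfs : ∀ i ∈ s, ω i • (f i : H) = μ i := fun i hi => by
    simp [f, hi, smul_smul, (hω i).ne']
  have hft : ∀ i ∈ t, ω i • (f i : H) = -ν i := fun i hi => by
    simp [f, Finset.disjoint_right.1 hst hi, smul_smul, (hω i).ne']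
  have hsum : ∑ i ∈ s ∪ t, ω i • (f i : H) = ∑ i ∈ s, (μ i : H) - ∑ i ∈ t, (ν i : H) := by
    rw [Finset.sum_union hst, Finset.sum_congr rfl hfs, Finset.sum_congr rfl hft,
      Finset.sum_neg_distrib, sub_eq_add_neg]
  have hupper : ‖∑ i ∈ s, (μ i : H)‖ ^ 2 ≤ D * ∑ i ∈ s, ‖(f i : H)‖ ^ 2 := by
    simpa only [Finset.sum_congr rfl hfs] using (hRiesz s f).2
  have hlower := (hRiesz (s ∪ t) f).1
  rw [hsum] at hlower
  have hsub : ∑ i ∈ s, ‖(f i : H)‖ ^ 2 ≤ ∑ i ∈ s ∪ t, ‖(f i : H)‖ ^ 2 :=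
    Finset.sum_le_sum_of_subset_of_nonneg Finset.subset_union_left fun _ _ _ => sq_nonneg _
  rw [div_mul_eq_mul_div, div_le_iff₀ hD]
  calc C * ‖∑ i ∈ s, (μ i : H)‖ ^ 2 ≤ C * (D * ∑ i ∈ s ∪ t, ‖(f i : H)‖ ^ 2) := by
        gcongr; exact hupper.trans (by gcongr)
    _ = D * (C * ∑ i ∈ s ∪ t, ‖(f i : H)‖ ^ 2) := by ring
    _ ≤ _ := by rw [mul_comm _ D]; gcongr

theorem IsFusionRieszBasis.disjoint_biSup_topologicalClosure (hW : IsFusionRieszBasis W ω)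
    {A B : Set ι} (hAB : Disjoint A B) :
    Disjoint (⨆ i ∈ A, W i) (⨆ i ∈ B, W i).topologicalClosure := by
  obtain ⟨c, hc, hcz⟩ := hW.exists_pos_mul_norm_sq_le_norm_sub_sq
  rw [Submodule.disjoint_def]
  intro z hzA hzB
  obtain ⟨s, hsA, hzs⟩ := Submodule.exists_finset_subset_of_mem_biSup hzA
  have hclosed : IsClosed {u : H | c * ‖z‖ ^ 2 ≤ ‖z - u‖ ^ 2} :=
    isClosed_le continuous_const (by fun_prop)
  have hspan : ((⨆ i ∈ B, W i : Submodule ℂ H) : Set H) ⊆ {u | c * ‖z‖ ^ 2 ≤ ‖z - u‖ ^ 2} := by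
    intro u hu
    obtain ⟨t, htB, hut⟩ := Submodule.exists_finset_subset_of_mem_biSup hu
    exact hcz s t (Finset.disjoint_coe.1 (hAB.mono hsA htB)) z hzs u hut
  have hz : c * ‖z‖ ^ 2 ≤ ‖z - z‖ ^ 2 :=
    hclosed.closure_subset_iff.2 hspan (by rwa [← Submodule.topologicalClosure_coe])
  rw [sub_self, norm_zero, zero_pow two_ne_zero, ← mul_zero c] at hz
  simpa using le_of_mul_le_mul_left hz hc

end FusionRieszBasis

theorem Submodule.not_finiteDimensional_biSup_compl_pair {𝕜 E ι : Type*} [RCLike 𝕜]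
    [NormedAddCommGroup E] [NormedSpace 𝕜 E] (hE : ¬ FiniteDimensional 𝕜 E)
    {W : ι → Submodule 𝕜 E} (hW : (⨆ i, W i).topologicalClosure = ⊤) {a b : ι}
    [FiniteDimensional 𝕜 (W a)] [FiniteDimensional 𝕜 (W b)] :
    ¬ FiniteDimensional 𝕜 ↥(⨆ i ∈ ({a, b} : Set ι)ᶜ, W i) := by
  intro hN
  change FiniteDimensional 𝕜 ↥(⨆ i, ⨆ (_ : i ∉ ({a, b} : Set ι)), W i) at hN
  rw [iSup_split W (· ∈ ({a, b} : Set ι)), iSup_pair,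
    (closed_of_finiteDimensional _).submodule_topologicalClosure_eq] at hW
  have : FiniteDimensional 𝕜 (⊤ : Submodule 𝕜 E) := hW ▸ inferInstance
  exact hE topEquiv.finiteDimensional

theorem exists_pair_not_finiteDimensional_biSup_compl {𝕜 E ι : Type*} [RCLike 𝕜]
    [NormedAddCommGroup E] [NormedSpace 𝕜 E] (hE : ¬ FiniteDimensional 𝕜 E)
    {W : ι → Submodule 𝕜 E} (hW : (⨆ i, W i).topologicalClosure = ⊤)
    (hι : 2 < Cardinal.mk ι) :
    ∃ a b, a ≠ b ∧ ¬ FiniteDimensional 𝕜 ↥(⨆ i ∈ ({a, b} : Set ι)ᶜ, W i) := by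
  by_cases hinf : ∃ c, ¬ FiniteDimensional 𝕜 (W c)
  · obtain ⟨c, hc⟩ := hinf
    obtain ⟨a, ha⟩ := Cardinal.exists_notMem_of_length_lt [c]
      (by simpa using (by norm_num : (1 : Cardinal) < 2).trans hι)
    obtain ⟨b, hb⟩ := Cardinal.exists_notMem_of_length_lt [c, a] (by simpa using hι)
    simp only [List.mem_cons, List.not_mem_nil, or_false, not_or] at ha hb
    have hc_mem : c ∈ ({a, b} : Set ι)ᶜ := by simp [Ne.symm ha, Ne.symm hb.1]
    exact ⟨a, b, Ne.symm hb.2, fun hN =>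
      hc (Submodule.finiteDimensional_of_le (le_biSup W hc_mem))⟩
  · obtain ⟨a, b, hab⟩ := Cardinal.two_le_iff.1 hι.le
    have (i : ι) : FiniteDimensional 𝕜 (W i) := not_not.1 fun h => hinf ⟨i, h⟩
    exact ⟨a, b, hab, Submodule.not_finiteDimensional_biSup_compl_pair hE hW⟩

theorem Submodule.rank_le_rank_orthogonal_of_disjoint {𝕜 E : Type*} [RCLike 𝕜]
    [NormedAddCommGroup E] [InnerProductSpace 𝕜 E] {N K : Submodule 𝕜 E}
    [K.HasOrthogonalProjection] (h : Disjoint N K) :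
    Module.rank 𝕜 N ≤ Module.rank 𝕜 Kᗮ :=
  LinearMap.rank_le_of_injective (Kᗮ.orthogonalProjectionOnto.toLinearMap.domRestrict N) <| by
    rwa [LinearMap.injective_domRestrict_iff, ker_orthogonalProjectionOnto, orthogonal_orthogonal]

theorem rank_inf_le_rank_ker_of_eq_tsum {H ι : Type u} [NormedAddCommGroup H] [NormedSpace ℂ H]
    {E : ι → Submodule ℂ H} {ω : ι → ℝ} (T : lp (fun i => E i) 2 →L[ℂ] H)
    (hT : ∀ g : lp (fun i => E i) 2, T g = ∑' i, ω i • (g i : H)) {a b : ι} (hab : a ≠ b)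
    (hb : ω b ≠ 0) :
    Module.rank ℂ ↥(E a ⊓ E b) ≤
      Module.rank ℂ (LinearMap.ker (T : lp (fun i => E i) 2 →ₗ[ℂ] H)) := by
  classical
  have hsingle : ∀ i (v : E i), T (lp.single 2 i v) = ω i • (v : H) := by
    intro i v
    rw [hT, tsum_eq_single i fun j hj => by simp [hj]]
    simp
  let φ : ↥(E a ⊓ E b) →ₗ[ℂ] lp (fun i => E i) 2 :=
    lp.lsingle 2 a ∘ₗ Submodule.inclusion inf_le_left -
      (ω a / ω b : ℝ) • (lp.lsingle 2 b ∘ₗ Submodule.inclusion inf_le_right)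
  have hφ : ∀ v, φ v ∈ LinearMap.ker (T : lp (fun i => E i) 2 →ₗ[ℂ] H) := by
    intro v
    simp [φ, hsingle, smul_smul, div_mul_cancel₀ _ hb]
  refine LinearMap.rank_le_of_injective (φ.codRestrict _ hφ) fun v w hvw => ?_
  have hφa : ∀ v, φ v a = Submodule.inclusion inf_le_left v := fun v => by
    simp only [φ, LinearMap.sub_apply, LinearMap.smul_apply, LinearMap.comp_apply,
      lp.lsingle_apply, lp.coeFn_sub, lp.coeFn_smul, Pi.sub_apply, Pi.smul_apply,
      lp.single_apply_self, lp.single_apply_ne _ _ _ hab, smul_zero, sub_zero]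
  have := congr_arg (fun g : lp (fun i => E i) 2 => g a) (Subtype.ext_iff.1 hvw)
  simp only [LinearMap.codRestrict_apply, hφa] at this
  exact Submodule.inclusion_injective _ this

theorem excess_orthogonalComplement_of_fusionRieszBasis_infinite_general
    {H : Type} [NormedAddCommGroup H] [InnerProductSpace ℂ H] [CompleteSpace H]
    (hinf : ¬ FiniteDimensional ℂ H)
    {ι : Type} (hI : 2 < Cardinal.mk ι)
    (W : ι → Submodule ℂ H) (ω : ι → ℝ)
    (hW : IsFusionRieszBasis W ω)
    -- synthesis operator of `W⊥`:
    (T : lp (fun i => ↥((W i)ᗮ)) 2 →L[ℂ] H)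
    (hT : ∀ g : lp (fun i => ↥((W i)ᗮ)) 2, T g = ∑' i, ω i • ((g i : H))) :
    Cardinal.aleph0 ≤ Module.rank ℂ (LinearMap.ker (T : lp (fun i => ↥((W i)ᗮ)) 2 →ₗ[ℂ] H)) := by
  obtain ⟨a, b, hab, hN⟩ := exists_pair_not_finiteDimensional_biSup_compl hinf hW.2.1 hI
  set M := (⨆ i ∈ ({a, b} : Set ι), W i).topologicalClosure
  have : CompleteSpace M := (Submodule.isClosed_topologicalClosure _).completeSpace_coe
  have hdisj : Disjoint (⨆ i ∈ ({a, b} : Set ι)ᶜ, W i) M :=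
    hW.disjoint_biSup_topologicalClosure disjoint_compl_left
  calc Cardinal.aleph0 ≤ Module.rank ℂ ↥(⨆ i ∈ ({a, b} : Set ι)ᶜ, W i) :=
        not_lt.1 (Module.rank_lt_aleph0_iff.not.2 hN)
    _ ≤ Module.rank ℂ Mᗮ := Submodule.rank_le_rank_orthogonal_of_disjoint hdisj
    _ = Module.rank ℂ ↥((W a)ᗮ ⊓ (W b)ᗮ) := by
        rw [Submodule.orthogonal_closure, iSup_pair, Submodule.inf_orthogonal]
    _ ≤ _ := rank_inf_le_rank_ker_of_eq_tsum T hT hab (hW.1 b).ne'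

/-- if `W` is a fusion Riesz basis of an infinite-dimensional
Hilbert space with `|I| > 2` and `W⊥` is a fusion frame, then `e(W⊥) = ∞`. -/
theorem excess_orthogonalComplement_of_fusionRieszBasis_infinite
    {H : Type} [NormedAddCommGroup H] [InnerProductSpace ℂ H] [CompleteSpace H]
    (hinf : ¬ FiniteDimensional ℂ H)
    {ι : Type} (hI : 2 < Cardinal.mk ι)
    (W : ι → Submodule ℂ H) [∀ i, CompleteSpace (W i)] (ω : ι → ℝ)
    (hW : IsFusionRieszBasis W ω)
    (hWperp : IsFusionFrame (fun i => (W i)ᗮ) ω)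
    -- synthesis operator of `W⊥`:
    (T : lp (fun i => ↥((W i)ᗮ)) 2 →L[ℂ] H)
    (hT : ∀ g : lp (fun i => ↥((W i)ᗮ)) 2, T g = ∑' i, ω i • ((g i : H))) :
    Cardinal.aleph0 ≤ Module.rank ℂ (LinearMap.ker (T : lp (fun i => ↥((W i)ᗮ)) 2 →ₗ[ℂ] H)) :=
  excess_orthogonalComplement_of_fusionRieszBasis_infinite_general hinf hI W ω hW T hT
end
end

section
/- Let {e_i}_{i∈Z} be an orthonormal basis of a Hilbert space H, W_1 = closed span of {e_i : i ≥ 0}, W_2 = closed span of {e_i : i ≤ 0}, and ω > 0. Then W = {(W_1, ω), (W_2, ω)} is a fusion frame for H with fusion frame operator S_W satisfying S_W^{-1} f = ω^{-2}(f − ⟨f, e_0⟩ e_0/2), and the excess of W equals 1. -/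
noncomputable section
open scoped ENNReal

/-!
The closed spans satisfy `W₁ᗮ = span{e_i : i < 0} ≤ W₂` and `W₁ ⊓ W₂ = ℂ e₀`, so `W₂` is the
orthogonal sum of `W₁ᗮ` and `ℂ e₀`. Hence `P_{W₁} + P_{W₂} = 1 + P_{ℂ e₀}`, which gives the frame
bounds `ω²` and `2ω²` and, since `P_{ℂ e₀}` is idempotent, the inverse `1 - P_{ℂ e₀} / 2`. The
kernel of the synthesis operator is `{(x, -x) : x ∈ W₁ ⊓ W₂}`, a line.
-/

open Submodule

namespace Submodule

section InnerProductSpace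

variable {𝕜 E : Type*} [RCLike 𝕜] [NormedAddCommGroup E] [InnerProductSpace 𝕜 E]

theorem topologicalClosure_span_le_orthogonal_singleton {s : Set E} {v : E}
    (h : ∀ u ∈ s, inner 𝕜 v u = 0) : (span 𝕜 s).topologicalClosure ≤ (𝕜 ∙ v)ᗮ :=
  topologicalClosure_minimal _
    (span_le.2 fun u hu => mem_orthogonal_singleton_iff_inner_right.2 (h u hu))
    (isClosed_orthogonal _)

variable {U V L : Submodule 𝕜 E} [U.HasOrthogonalProjection] [V.HasOrthogonalProjection]
  [L.HasOrthogonalProjection]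

/-- When `Uᗮ ≤ V`, the space `V` is the orthogonal sum of `Uᗮ` and `U ⊓ V`. -/
theorem starProjection_add_starProjection_of_orthogonal_le (hUV : Uᗮ ≤ V) (hL : U ⊓ V = L)
    (f : E) : U.starProjection f + V.starProjection f = f + L.starProjection f := by
  have hLU : L ≤ U := hL ▸ inf_le_left
  have hLV : L ≤ V := hL ▸ inf_le_right
  suffices V.starProjection f = (f - U.starProjection f) + L.starProjection f by
    rw [this]; abel
  refine eq_starProjection_of_mem_of_inner_eq_zero
    (V.add_mem (hUV (sub_starProjection_mem_orthogonal f)) (hLV (starProjection_apply_mem L f)))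
    fun w hw => ?_
  have hUw : U.starProjection w ∈ L := by
    rw [← hL]
    refine ⟨starProjection_apply_mem U w, ?_⟩
    simpa using V.sub_mem hw (hUV (sub_starProjection_mem_orthogonal w))
  have hLf : inner 𝕜 (L.starProjection f) w = inner 𝕜 f (U.starProjection w) := by
    rw [← starProjection_eq_self_iff.2 (hLU (starProjection_apply_mem L f)),
      inner_starProjection_left_eq_right, inner_starProjection_left_eq_right,
      starProjection_eq_self_iff.2 hUw]
  rw [show f - (f - U.starProjection f + L.starProjection f)
      = U.starProjection f - L.starProjection f by abel,
    inner_sub_left, hLf, inner_starProjection_left_eq_right, sub_self]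

theorem norm_sq_le_norm_sq_starProjection_add_norm_sq_starProjection (hUV : Uᗮ ≤ V) (f : E) :
    ‖f‖ ^ 2 ≤ ‖U.starProjection f‖ ^ 2 + ‖V.starProjection f‖ ^ 2 := by
  have h : ‖Uᗮ.starProjection f‖ ≤ ‖V.starProjection f‖ := by
    rw [starProjection_apply, ← orthogonalProjectionOnto_starProjection_of_le hUV f]
    exact norm_orthogonalProjectionOnto_apply_le _ _
  rw [norm_sq_eq_add_norm_sq_starProjection f U]
  gcongr

theorem exists_fusionFrame_bounds_of_orthogonal_le (hUV : Uᗮ ≤ V) {ω : ℝ} (hω : ω ≠ 0) :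
    ∃ A B : ℝ, 0 < A ∧ A ≤ B ∧ ∀ f : E,
      (A * ‖f‖ ^ 2 ≤ ω ^ 2 * ‖U.starProjection f‖ ^ 2 + ω ^ 2 * ‖V.starProjection f‖ ^ 2) ∧
      (ω ^ 2 * ‖U.starProjection f‖ ^ 2 + ω ^ 2 * ‖V.starProjection f‖ ^ 2 ≤ B * ‖f‖ ^ 2) := by
  refine ⟨ω ^ 2, 2 * ω ^ 2, by positivity, by nlinarith [sq_nonneg ω], fun f => ⟨?_, ?_⟩⟩
  · rw [← mul_add]
    gcongr
    exact norm_sq_le_norm_sq_starProjection_add_norm_sq_starProjection hUV f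
  · calc ω ^ 2 * ‖U.starProjection f‖ ^ 2 + ω ^ 2 * ‖V.starProjection f‖ ^ 2
        ≤ ω ^ 2 * ‖f‖ ^ 2 + ω ^ 2 * ‖f‖ ^ 2 := by
          gcongr <;> exact norm_starProjection_apply_le _ f
      _ = 2 * ω ^ 2 * ‖f‖ ^ 2 := by ring

end InnerProductSpace

theorem rank_ker_coprod_subtype {R M : Type*} [Ring R] [AddCommGroup M] [Module R M]
    (p q : Submodule R M) :
    Module.rank R (LinearMap.ker (p.subtype.coprod q.subtype)) = Module.rank R ↥(p ⊓ q) := by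
  let φ : ↥(p ⊓ q) →ₗ[R] p × q := (inclusion inf_le_left).prod (-inclusion inf_le_right)
  have hφ : Function.Injective φ := fun x y hxy =>
    Subtype.ext (congrArg (fun z : p × q => (z.1 : M)) hxy)
  have hrange : LinearMap.range φ = LinearMap.ker (p.subtype.coprod q.subtype) := by
    ext ⟨x, y⟩
    simp only [LinearMap.mem_range, LinearMap.mem_ker, LinearMap.coprod_apply, subtype_apply]
    constructor
    · rintro ⟨z, hz⟩
      simp only [Prod.ext_iff] at hz
      rw [← hz.1, ← hz.2]
      simp [φ]
    · intro h
      have hy : (y : M) = -x := eq_neg_of_add_eq_zero_right h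
      refine ⟨⟨x, x.2, ?_⟩, ?_⟩
      · simpa [hy] using q.neg_mem y.2
      · ext <;> simp [φ, hy]
  rw [← hrange, rank_range_of_injective φ hφ]

theorem rank_ker_eq_rank_inf_of_apply_eq {K M : Type*} [Field K] [AddCommGroup M] [Module K M]
    {p q : Submodule K M} (T : p × q →ₗ[K] M) {c : K} (hc : c ≠ 0)
    (hT : ∀ x, T x = c • (x.1 : M) + c • (x.2 : M)) :
    Module.rank K (LinearMap.ker T) = Module.rank K ↥(p ⊓ q) := by
  have hT' : T = c • p.subtype.coprod q.subtype := LinearMap.ext fun x => by simp [hT]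
  rw [hT', LinearMap.ker_smul _ _ hc, rank_ker_coprod_subtype]

end Submodule

namespace Orthonormal

variable {𝕜 E ι : Type*} [RCLike 𝕜] [NormedAddCommGroup E] [InnerProductSpace 𝕜 E]
  {b : ι → E}

theorem inner_eq_zero_of_mem_topologicalClosure_span_image (hb : Orthonormal 𝕜 b) {S : Set ι}
    {i : ι} (hi : i ∉ S) {g : E} (hg : g ∈ (span 𝕜 (b '' S)).topologicalClosure) :
    inner 𝕜 (b i) g = 0 := by
  refine mem_orthogonal_singleton_iff_inner_right.1 <|
    topologicalClosure_span_le_orthogonal_singleton ?_ hg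
  rintro _ ⟨j, hj, rfl⟩
  exact hb.inner_eq_zero (ne_of_mem_of_not_mem hj hi).symm

variable [CompleteSpace E]

theorem mem_topologicalClosure_span_image_iff (hb : Orthonormal 𝕜 b)
    (hbspan : (span 𝕜 (Set.range b)).topologicalClosure = ⊤) {S : Set ι} {g : E} :
    g ∈ (span 𝕜 (b '' S)).topologicalClosure ↔ ∀ i ∉ S, inner 𝕜 (b i) g = 0 := by
  set K := (span 𝕜 (b '' S)).topologicalClosure
  refine ⟨fun hg i hi => hb.inner_eq_zero_of_mem_topologicalClosure_span_image hi hg,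
    fun hg => ?_⟩
  set r := g - K.starProjection g
  have hr : ∀ i, inner 𝕜 (b i) r = 0 := fun i => by
    by_cases hi : i ∈ S
    · exact inner_right_of_mem_orthogonal
        (le_topologicalClosure _ (subset_span (Set.mem_image_of_mem b hi)))
        (sub_starProjection_mem_orthogonal g)
    · rw [inner_sub_right, hg i hi,
        hb.inner_eq_zero_of_mem_topologicalClosure_span_image hi (starProjection_apply_mem K g),
        sub_zero]
  have hrr : r ∈ (𝕜 ∙ r)ᗮ := by
    refine topologicalClosure_span_le_orthogonal_singleton ?_ (hbspan ▸ mem_top)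
    rintro _ ⟨i, rfl⟩
    rw [inner_eq_zero_symm]
    exact hr i
  have hr0 : r = 0 := inner_self_eq_zero.1 (mem_orthogonal_singleton_iff_inner_right.1 hrr)
  exact starProjection_eq_self_iff.1 (sub_eq_zero.1 hr0).symm

theorem topologicalClosure_span_image_inf (hb : Orthonormal 𝕜 b)
    (hbspan : (span 𝕜 (Set.range b)).topologicalClosure = ⊤) (S T : Set ι) :
    (span 𝕜 (b '' S)).topologicalClosure ⊓ (span 𝕜 (b '' T)).topologicalClosure
      = (span 𝕜 (b '' (S ∩ T))).topologicalClosure := by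
  ext g
  simp only [mem_inf, hb.mem_topologicalClosure_span_image_iff hbspan, Set.mem_inter_iff]
  grind

theorem orthogonal_topologicalClosure_span_image_le (hb : Orthonormal 𝕜 b)
    (hbspan : (span 𝕜 (Set.range b)).topologicalClosure = ⊤) {S T : Set ι} (hST : Sᶜ ⊆ T) :
    (span 𝕜 (b '' S)).topologicalClosureᗮ ≤ (span 𝕜 (b '' T)).topologicalClosure := by
  intro g hg
  rw [hb.mem_topologicalClosure_span_image_iff hbspan]
  intro i hi
  have hiS : i ∈ S := not_not.1 (mt (@hST i) hi)
  exact inner_right_of_mem_orthogonal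
    (le_topologicalClosure _ (subset_span (Set.mem_image_of_mem b hiS))) hg

theorem orthogonal_topologicalClosure_span_image_Ici_le [LinearOrder ι]
    (hb : Orthonormal 𝕜 b) (hbspan : (span 𝕜 (Set.range b)).topologicalClosure = ⊤) (a : ι) :
    (span 𝕜 (b '' Set.Ici a)).topologicalClosureᗮ
      ≤ (span 𝕜 (b '' Set.Iic a)).topologicalClosure :=
  hb.orthogonal_topologicalClosure_span_image_le hbspan fun _ hi => (not_le.1 hi).le

theorem topologicalClosure_span_image_Ici_inf_Iic [LinearOrder ι] (hb : Orthonormal 𝕜 b)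
    (hbspan : (span 𝕜 (Set.range b)).topologicalClosure = ⊤) (a : ι) :
    (span 𝕜 (b '' Set.Ici a)).topologicalClosure
      ⊓ (span 𝕜 (b '' Set.Iic a)).topologicalClosure = 𝕜 ∙ b a := by
  rw [hb.topologicalClosure_span_image_inf hbspan, Set.Ici_inter_Iic, Set.Icc_self,
    Set.image_singleton, topologicalClosure_eq_self]

end Orthonormal

section UnitVector

variable {𝕜 E : Type*} [RCLike 𝕜] [NormedAddCommGroup E] [InnerProductSpace 𝕜 E] {e : E}

theorem add_inner_smul_sub_half_inner_smul (he : ‖e‖ = 1) (f : E) :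
    (f + inner 𝕜 e f • e) - (inner 𝕜 e (f + inner 𝕜 e f • e) / 2) • e = f := by
  have hee : inner 𝕜 e e = 1 := by simp [he]
  rw [inner_add_right, inner_smul_right, hee]
  match_scalars <;> ring

theorem sub_half_inner_smul_add_inner_smul (he : ‖e‖ = 1) (f : E) :
    (f - (inner 𝕜 e f / 2) • e) + inner 𝕜 e (f - (inner 𝕜 e f / 2) • e) • e = f := by
  have hee : inner 𝕜 e e = 1 := by simp [he]
  rw [inner_sub_right, inner_smul_right, hee]
  match_scalars <;> ring

end UnitVector

/-- for `W₁ = span{e i : i ≥ 0}`, `W₂ = span{e i : i ≤ 0}` and a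
weight `ω > 0`, `W = {(W₁, ω), (W₂, ω)}` is a fusion frame, its fusion frame
operator satisfies `S_W⁻¹ f = ω⁻²(f − ⟨f, e₀⟩ e₀ / 2)`, and `e(W) = 1`. -/
theorem fusionFrame_two_halfspaces_excess_one
    {H : Type} [NormedAddCommGroup H] [InnerProductSpace ℂ H] [CompleteSpace H]
    (b : ℤ → H) (hb : Orthonormal ℂ b)
    (hbspan : (Submodule.span ℂ (Set.range b)).topologicalClosure = ⊤)
    (W₁ W₂ : Submodule ℂ H) [CompleteSpace W₁] [CompleteSpace W₂]
    (hW₁ : W₁ = (Submodule.span ℂ (b '' {i : ℤ | 0 ≤ i})).topologicalClosure)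
    (hW₂ : W₂ = (Submodule.span ℂ (b '' {i : ℤ | i ≤ 0})).topologicalClosure)
    (ω : ℝ) (hω : 0 < ω)
    -- synthesis operator of `W = {(W₁, ω), (W₂, ω)}`:
    (T : (W₁ × W₂) →L[ℂ] H)
    (hT : ∀ p : W₁ × W₂, T p = ω • (p.1 : H) + ω • (p.2 : H)) :
    -- `W` is a fusion frame:
    (∃ A B : ℝ, 0 < A ∧ A ≤ B ∧ ∀ f : H,
      (A * ‖f‖ ^ 2 ≤ ω ^ 2 * ‖(Submodule.orthogonalProjectionOnto W₁ f : H)‖ ^ 2 +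
          ω ^ 2 * ‖(Submodule.orthogonalProjectionOnto W₂ f : H)‖ ^ 2) ∧
      (ω ^ 2 * ‖(Submodule.orthogonalProjectionOnto W₁ f : H)‖ ^ 2 +
          ω ^ 2 * ‖(Submodule.orthogonalProjectionOnto W₂ f : H)‖ ^ 2 ≤ B * ‖f‖ ^ 2)) ∧
    -- `f ↦ ω⁻²(f − ⟨f, e₀⟩ e₀ / 2)` is a two-sided inverse of `S_W`:
    (∀ f : H,
      (ω ^ 2 • (Submodule.orthogonalProjectionOnto W₁
          ((ω ^ 2)⁻¹ • (f - ((inner ℂ (b 0) f : ℂ) / 2) • b 0)) : H) +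
        ω ^ 2 • (Submodule.orthogonalProjectionOnto W₂
          ((ω ^ 2)⁻¹ • (f - ((inner ℂ (b 0) f : ℂ) / 2) • b 0)) : H) = f) ∧
      ((ω ^ 2)⁻¹ • ((ω ^ 2 • (Submodule.orthogonalProjectionOnto W₁ f : H) +
            ω ^ 2 • (Submodule.orthogonalProjectionOnto W₂ f : H)) -
          ((inner ℂ (b 0) (ω ^ 2 • (Submodule.orthogonalProjectionOnto W₁ f : H) +
            ω ^ 2 • (Submodule.orthogonalProjectionOnto W₂ f : H)) : ℂ) / 2) • b 0) = f)) ∧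
    -- the excess of `W` equals 1:
    Module.rank ℂ (LinearMap.ker (T : (W₁ × W₂) →ₗ[ℂ] H)) = 1 := by
  have he : ‖b 0‖ = 1 := hb.1 0
  have hω2 : ω ^ 2 ≠ 0 := by positivity
  have horth : W₁ᗮ ≤ W₂ := by
    rw [hW₁, hW₂]
    exact hb.orthogonal_topologicalClosure_span_image_Ici_le hbspan 0
  have hinf : W₁ ⊓ W₂ = ℂ ∙ b 0 := by
    rw [hW₁, hW₂]
    exact hb.topologicalClosure_span_image_Ici_inf_Iic hbspan 0
  have hsum : ∀ f, (W₁.orthogonalProjectionOnto f : H) + (W₂.orthogonalProjectionOnto f : H)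
      = f + inner ℂ (b 0) f • b 0 := fun f => by
    rw [← starProjection_unit_singleton ℂ he]
    exact starProjection_add_starProjection_of_orthogonal_le horth hinf f
  refine ⟨exists_fusionFrame_bounds_of_orthogonal_le horth hω.ne', fun f => ⟨?_, ?_⟩, ?_⟩
  · simp only [ContinuousLinearMap.map_smul_of_tower, coe_smul_of_tower, smul_inv_smul₀ hω2,
      hsum]
    exact sub_half_inner_smul_add_inner_smul he f
  · have hω2' : ((ω ^ 2 : ℝ) : ℂ) ≠ 0 := Complex.ofReal_ne_zero.2 hω2
    rw [← smul_add, hsum f, ← Complex.coe_smul, ← Complex.coe_smul, inner_smul_right,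
      mul_div_assoc, mul_smul, ← smul_sub, Complex.ofReal_inv, inv_smul_smul₀ hω2']
    exact add_inner_smul_sub_half_inner_smul he f
  · rw [rank_ker_eq_rank_inf_of_apply_eq _ (Complex.ofReal_ne_zero.2 hω.ne')
      fun p => by simp [hT, Complex.coe_smul], hinf, ← Module.finrank_eq_rank,
      finrank_span_singleton (hb.ne_zero 0), Nat.cast_one]
end
end

section
/- Let W = {(W_i, ω_i)}_{i∈I} be a fusion frame for a finite-dimensional Hilbert space H_n with a Q_A-dual fusion frame V = {(V_i, υ_i)}_{i∈I}, where A is a bounded left inverse of T_W*. Then |e(V) − e(W)| = |Σ_{i∈I} dim(V_i ∩ N(p_i A*)) − Σ_{i∈I} dim N(A p_i*)|, where p_i : ⊕_k W_k → W_i is the coordinate projection. -/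
/-!
Both synthesis operators are onto (`T_W` has the right inverse `A*`, and `T_V Q_A T_W* = I`), so
`e(V) - e(W) = ∑ dim V i - ∑ dim W i`. The operator `Bᵢ = A pᵢ*` has adjoint `pᵢ A*` and range
inside `V i`, hence `N(pᵢ A*) = R(Bᵢ)ᗮ`, and `rank Bᵢ` splits off both `dim V i`
(as `rank Bᵢ + dim (V i ∩ R(Bᵢ)ᗮ)`) and `dim W i` (as `rank Bᵢ + dim N(Bᵢ)`).
-/

noncomputable section
open scoped ENNReal

/-- The coordinate projection `p i : ⊕ₖ W k → W i`. -/
def coordProj {H : Type} [NormedAddCommGroup H] [InnerProductSpace ℂ H]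
    {ι : Type} (W : ι → Submodule ℂ H) (i : ι) :
    PiLp 2 (fun k => ↥(W k)) →ₗ[ℂ] ↥(W i) :=
  (LinearMap.proj i).comp (WithLp.linearEquiv 2 ℂ (∀ k, ↥(W k))).toLinearMap

/-- The coordinate inclusion `p i * : W i → ⊕ₖ W k`. -/
def coordIncl {H : Type} [NormedAddCommGroup H] [InnerProductSpace ℂ H]
    {ι : Type} [DecidableEq ι] (W : ι → Submodule ℂ H) (i : ι) :
    ↥(W i) →ₗ[ℂ] PiLp 2 (fun k => ↥(W k)) :=
  ((WithLp.linearEquiv 2 ℂ (∀ k, ↥(W k))).symm.toLinearMap).comp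
    (LinearMap.single ℂ (fun k => ↥(W k)) i)

open Module
open scoped InnerProductSpace

section Adjoint

variable {𝕜 E F : Type*} [RCLike 𝕜] [NormedAddCommGroup E] [InnerProductSpace 𝕜 E]
  [NormedAddCommGroup F] [InnerProductSpace 𝕜 F]

/-- `A†` is then a right inverse of `T`. -/
theorem ContinuousLinearMap.surjective_of_leftInverse_adjoint [CompleteSpace E]
    [CompleteSpace F] {T A : E →L[𝕜] F}
    (hA : Function.LeftInverse A (ContinuousLinearMap.adjoint T)) : Function.Surjective T :=
  fun y => ⟨ContinuousLinearMap.adjoint A y, ext_inner_right 𝕜 fun z => by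
    rw [← ContinuousLinearMap.adjoint_inner_right, ContinuousLinearMap.adjoint_inner_left, hA]⟩

theorem ker_comp_adjoint_eq_orthogonal_range [CompleteSpace E] [CompleteSpace F] {U : Type*}
    [NormedAddCommGroup U] [InnerProductSpace 𝕜 U] {J : U →ₗ[𝕜] E} {P : E →ₗ[𝕜] U}
    (hJP : ∀ x y, ⟪J x, y⟫_𝕜 = ⟪x, P y⟫_𝕜) (A : E →L[𝕜] F) :
    LinearMap.ker (P ∘ₗ (ContinuousLinearMap.adjoint A).toLinearMap) =
      (LinearMap.range (A.toLinearMap ∘ₗ J))ᗮ := by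
  ext f
  have hinner : ∀ x, ⟪A (J x), f⟫_𝕜 = ⟪x, P (ContinuousLinearMap.adjoint A f)⟫_𝕜 := fun x => by
    rw [← ContinuousLinearMap.adjoint_inner_right, hJP]
  simp only [LinearMap.mem_ker, Submodule.mem_orthogonal, LinearMap.mem_range,
    forall_exists_index, forall_apply_eq_imp_iff, LinearMap.comp_apply,
    ContinuousLinearMap.coe_coe, hinner]
  exact ⟨fun h x => by rw [h, inner_zero_right], fun h => inner_self_eq_zero.1 (h _)⟩

theorem finrank_add_finrank_ker_of_range_le {U : Type*} [AddCommGroup U] [Module 𝕜 U]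
    [FiniteDimensional 𝕜 U] {B : U →ₗ[𝕜] E} {V : Submodule 𝕜 E} [FiniteDimensional 𝕜 V]
    (hB : LinearMap.range B ≤ V) :
    finrank 𝕜 V + finrank 𝕜 (LinearMap.ker B) =
      finrank 𝕜 U + finrank 𝕜 ↥(V ⊓ (LinearMap.range B)ᗮ) := by
  have hV := Submodule.finrank_add_inf_finrank_orthogonal hB
  have hU := B.finrank_range_add_finrank_ker
  rw [inf_comm]
  omega

end Adjoint

theorem LinearMap.finrank_ker_add_of_surjective {K V W : Type*} [DivisionRing K]
    [AddCommGroup V] [Module K V] [FiniteDimensional K V] [AddCommGroup W] [Module K W]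
    {f : V →ₗ[K] W} (hf : Function.Surjective f) :
    finrank K (LinearMap.ker f) + finrank K W = finrank K V := by
  rw [← f.finrank_range_add_finrank_ker, LinearMap.range_eq_top.2 hf, finrank_top, add_comm]

theorem PiLp.finrank_eq_sum {K ι : Type*} [DivisionRing K] [Fintype ι] (p : ℝ≥0∞)
    (M : ι → Type*) [∀ i, AddCommGroup (M i)] [∀ i, Module K (M i)]
    [∀ i, FiniteDimensional K (M i)] :
    finrank K (PiLp p M) = ∑ i, finrank K (M i) :=
  (WithLp.linearEquiv p K (∀ i, M i)).finrank_eq.trans (finrank_pi_fintype K)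

section FusionFrame

variable {H : Type} [NormedAddCommGroup H] [InnerProductSpace ℂ H] {ι : Type} [Fintype ι]

theorem inner_coordIncl_left [DecidableEq ι] (W : ι → Submodule ℂ H) (i : ι) (x : W i)
    (g : PiLp 2 (fun k => ↥(W k))) :
    ⟪coordIncl W i x, g⟫_ℂ = ⟪x, coordProj W i g⟫_ℂ := by
  rw [PiLp.inner_apply, Finset.sum_eq_single i (fun k _ hk => by simp [coordIncl, hk])
    (by simp)]
  simp [coordIncl, coordProj]

theorem surjective_synthesis_of_forall_eq_sum {V : ι → Submodule ℂ H} {υ : ι → ℝ}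
    (hυ : ∀ i, υ i ≠ 0) (T : PiLp 2 (fun i => ↥(V i)) → H)
    (hT : ∀ g : PiLp 2 (fun i => ↥(V i)), T g = ∑ i, υ i • (g i : H))
    (hsum : ∀ h : H, ∃ v : ∀ i, V i, ∑ i, (v i : H) = h) : Function.Surjective T := by
  intro h
  obtain ⟨v, rfl⟩ := hsum h
  refine ⟨WithLp.toLp 2 fun i => (υ i)⁻¹ • v i, ?_⟩
  rw [hT]
  refine Finset.sum_congr rfl fun i _ => ?_
  simp [smul_smul, hυ i]

end FusionFrame

theorem abs_excess_sub_excess_Qdual_general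
    {H : Type} [NormedAddCommGroup H] [InnerProductSpace ℂ H]
    [FiniteDimensional ℂ H]
    {ι : Type} [Fintype ι] [DecidableEq ι]
    (W V : ι → Submodule ℂ H) (υ : ι → ℝ)
    (hV : IsFusionFrame V υ)
    -- synthesis operators:
    (TW : PiLp 2 (fun i => ↥(W i)) →L[ℂ] H)
    (TV : PiLp 2 (fun i => ↥(V i)) →L[ℂ] H)
    (hTV : ∀ g : PiLp 2 (fun i => ↥(V i)), TV g = ∑ i, υ i • ((g i : H)))
    -- `A` is a bounded left inverse of the analysis operator `T_W*`:
    (A : PiLp 2 (fun i => ↥(W i)) →L[ℂ] H)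
    (hA : ∀ h : H, A (ContinuousLinearMap.adjoint TW h) = h)
    -- `A Mᵢ (⊕ W) ⊆ V i`, so that `Q_A {f j} = {υ i⁻¹ A (Mᵢ {f j})}ᵢ` maps into `⊕ V i`:
    (hrange : ∀ (i : ι) (g : PiLp 2 (fun k => ↥(W k))),
      A (coordIncl W i ((g : ∀ k, ↥(W k)) i)) ∈ V i)
    -- `V` is the `Q_A`-dual: `T_V Q_A T_W* = I`:
    (hdual : ∀ h : H,
      ∑ i, A (coordIncl W i ((ContinuousLinearMap.adjoint TW h : ∀ k, ↥(W k)) i)) = h) :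
    ((Module.finrank ℂ (LinearMap.ker TV.toLinearMap) : ℤ) -
        (Module.finrank ℂ (LinearMap.ker TW.toLinearMap) : ℤ)).natAbs =
      ((∑ i, (Module.finrank ℂ
          ↥(V i ⊓ LinearMap.ker ((coordProj W i).comp
            (ContinuousLinearMap.adjoint A).toLinearMap)) : ℤ)) -
        ∑ i, (Module.finrank ℂ
          ↥(LinearMap.ker (A.toLinearMap.comp (coordIncl W i))) : ℤ)).natAbs := by
  have hTWsurj := TW.surjective_of_leftInverse_adjoint hA
  have hTVsurj := surjective_synthesis_of_forall_eq_sum (fun i => (hV.1 i).ne') TV hTV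
    fun h => ⟨fun i => ⟨_, hrange i (ContinuousLinearMap.adjoint TW h)⟩, hdual h⟩
  have hlocal : ∀ i, finrank ℂ (V i) +
      finrank ℂ (LinearMap.ker (A.toLinearMap ∘ₗ coordIncl W i)) =
      finrank ℂ (W i) + finrank ℂ ↥(V i ⊓ LinearMap.ker
        (coordProj W i ∘ₗ (ContinuousLinearMap.adjoint A).toLinearMap)) := fun i => by
    rw [ker_comp_adjoint_eq_orthogonal_range (inner_coordIncl_left W i)]
    refine finrank_add_finrank_ker_of_range_le ?_
    rintro _ ⟨x, rfl⟩
    simpa [coordIncl] using hrange i (coordIncl W i x)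
  have hkerV := LinearMap.finrank_ker_add_of_surjective (f := TV.toLinearMap) hTVsurj
  have hkerW := LinearMap.finrank_ker_add_of_surjective (f := TW.toLinearMap) hTWsurj
  have hsum := Finset.sum_congr rfl fun i (_ : i ∈ Finset.univ) => hlocal i
  rw [PiLp.finrank_eq_sum] at hkerV hkerW
  rw [Finset.sum_add_distrib, Finset.sum_add_distrib] at hsum
  rw [← Nat.cast_sum, ← Nat.cast_sum]
  congr 1
  omega

/-- for a `Q_A`-dual fusion frame `V` of `W` in `H_n`,
`|e(V) − e(W)| = |∑ᵢ dim (V i ∩ N(pᵢ A*)) − ∑ᵢ dim N(A pᵢ*)|`. -/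
theorem abs_excess_sub_excess_Qdual
    {H : Type} [NormedAddCommGroup H] [InnerProductSpace ℂ H]
    [FiniteDimensional ℂ H]
    {ι : Type} [Fintype ι] [DecidableEq ι]
    (W V : ι → Submodule ℂ H) (ω υ : ι → ℝ)
    (hW : IsFusionFrame W ω) (hV : IsFusionFrame V υ)
    -- synthesis operators:
    (TW : PiLp 2 (fun i => ↥(W i)) →L[ℂ] H)
    (hTW : ∀ g : PiLp 2 (fun i => ↥(W i)), TW g = ∑ i, ω i • ((g i : H)))
    (TV : PiLp 2 (fun i => ↥(V i)) →L[ℂ] H)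
    (hTV : ∀ g : PiLp 2 (fun i => ↥(V i)), TV g = ∑ i, υ i • ((g i : H)))
    -- `A` is a bounded left inverse of the analysis operator `T_W*`:
    (A : PiLp 2 (fun i => ↥(W i)) →L[ℂ] H)
    (hA : ∀ h : H, A (ContinuousLinearMap.adjoint TW h) = h)
    -- `A Mᵢ (⊕ W) ⊆ V i`, so that `Q_A {f j} = {υ i⁻¹ A (Mᵢ {f j})}ᵢ` maps into `⊕ V i`:
    (hrange : ∀ (i : ι) (g : PiLp 2 (fun k => ↥(W k))),
      A (coordIncl W i ((g : ∀ k, ↥(W k)) i)) ∈ V i)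
    -- `V` is the `Q_A`-dual: `T_V Q_A T_W* = I`:
    (hdual : ∀ h : H,
      ∑ i, A (coordIncl W i ((ContinuousLinearMap.adjoint TW h : ∀ k, ↥(W k)) i)) = h) :
    ((Module.finrank ℂ (LinearMap.ker TV.toLinearMap) : ℤ) -
        (Module.finrank ℂ (LinearMap.ker TW.toLinearMap) : ℤ)).natAbs =
      ((∑ i, (Module.finrank ℂ
          ↥(V i ⊓ LinearMap.ker ((coordProj W i).comp
            (ContinuousLinearMap.adjoint A).toLinearMap)) : ℤ)) -
        ∑ i, (Module.finrank ℂ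
          ↥(LinearMap.ker (A.toLinearMap.comp (coordIncl W i))) : ℤ)).natAbs :=
  abs_excess_sub_excess_Qdual_general W V υ hV TW TV hTV A hA hrange hdual
end
end

section
/- Let W = {(W_i, ω_i)}_{i∈I} be a fusion Riesz basis for a finite-dimensional Hilbert space H_n and V = {(V_i, ω_i)}_{i∈I} a Gavruta dual fusion frame of W (equivalently, V_i ⊇ S_W^{-1} W_i for all i). Then e(V) = Σ_{i∈I} dim(V_i ∩ S_W W_i⊥); in particular 0 ≤ e(V) ≤ Σ_{i∈I} dim W_i⊥. -/
/-!
A fusion Riesz basis `W` of a finite-dimensional space is a direct sum decomposition of it, so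
`∑ dim W i = dim H`, and its fusion frame operator `S` is self-adjoint. For `w ∈ W j` the vector
`g = S⁻¹ w` satisfies `∑ ω i ^ 2 π_{W i} g = w`, so by directness only the `j`-th summand is
nonzero, and the duality identity at `g` collapses to `g = π_{V j} g`: thus `S⁻¹ W j ≤ V j`.
Self-adjointness gives `(S⁻¹ W j)ᗮ = S (W j)ᗮ`, so `V j` splits orthogonally as
`S⁻¹ W j ⊕ (V j ⊓ S (W j)ᗮ)`. The duality identity also makes the synthesis operator of `V`
surjective, and rank–nullity gives `e(V) = ∑ dim V i - dim H = ∑ dim (V i ⊓ S (W i)ᗮ)`.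
-/

noncomputable section
open scoped ENNReal

theorem DirectSum.IsInternal.sum_finrank_eq {K M ι : Type*} [DivisionRing K] [AddCommGroup M]
    [Module K M] [FiniteDimensional K M] [Fintype ι] [DecidableEq ι] {A : ι → Submodule K M}
    (hA : DirectSum.IsInternal A) : ∑ i, Module.finrank K (A i) = Module.finrank K M := by
  rw [← Module.finrank_directSum,
    (LinearEquiv.ofBijective (DirectSum.coeLinearMap A) hA).finrank_eq]

section

variable {𝕜 E ι : Type*} [RCLike 𝕜] [NormedAddCommGroup E] [InnerProductSpace 𝕜 E]

theorem LinearMap.IsSymmetric.orthogonal_map {T : E →ₗ[𝕜] E} (hT : T.IsSymmetric)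
    (K : Submodule 𝕜 E) : (K.map T)ᗮ = Kᗮ.comap T := by
  ext x
  simp only [Submodule.mem_orthogonal, Submodule.mem_comap, Submodule.mem_map,
    forall_exists_index, and_imp, forall_apply_eq_imp_iff₂, hT _ x]

theorem Submodule.finrank_add_finrank_inf_map_orthogonal [FiniteDimensional 𝕜 E]
    {S : E ≃ₗ[𝕜] E} (hS : (S : E →ₗ[𝕜] E).IsSymmetric) {K V : Submodule 𝕜 E}
    (hKV : K.map (S.symm : E →ₗ[𝕜] E) ≤ V) :
    Module.finrank 𝕜 K + Module.finrank 𝕜 ↥(V ⊓ Kᗮ.map (S : E →ₗ[𝕜] E)) =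
      Module.finrank 𝕜 V := by
  have h := Submodule.finrank_add_inf_finrank_orthogonal hKV
  rwa [hS.toLinearMap_symm.orthogonal_map, Submodule.comap_equiv_eq_map_symm, S.symm_symm,
    LinearEquiv.finrank_map_eq, inf_comm] at h

variable [Fintype ι] [Module ℝ E] [IsScalarTower ℝ 𝕜 E]

theorem LinearMap.isSymmetric_of_apply_eq_sum_smul_orthogonalProjectionOnto
    (W : ι → Submodule 𝕜 E) [∀ i, (W i).HasOrthogonalProjection] (c : ι → ℝ) {T : E →ₗ[𝕜] E}
    (hT : ∀ f, T f = ∑ i, c i • (Submodule.orthogonalProjectionOnto (W i) f : E)) :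
    T.IsSymmetric := by
  intro x y
  simp only [hT, sum_inner, inner_sum, RCLike.real_smul_eq_coe_smul (K := 𝕜),
    inner_smul_real_left, inner_smul_real_right, ← Submodule.starProjection_apply,
    Submodule.inner_starProjection_left_eq_right]

theorem Submodule.map_symm_le_of_gavrutaDual {W V : ι → Submodule 𝕜 E}
    [∀ i, (W i).HasOrthogonalProjection] [∀ i, (V i).HasOrthogonalProjection] {ω : ι → ℝ}
    (hW : iSupIndep W) (S : E ≃ₗ[𝕜] E)
    (hS : ∀ f, S f = ∑ i, ω i ^ 2 • (orthogonalProjectionOnto (W i) f : E))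
    (hdual : ∀ f, ∑ i, (ω i * ω i) •
      (orthogonalProjectionOnto (V i) (S.symm (orthogonalProjectionOnto (W i) f : E)) : E) = f)
    (j : ι) : (W j).map (S.symm : E →ₗ[𝕜] E) ≤ V j := by
  classical
  rintro _ ⟨w, hw, rfl⟩
  set g := S.symm w
  have hcomponents : ∀ i,
      ω i ^ 2 • (orthogonalProjectionOnto (W i) g : E) = (Pi.single j w : ι → E) i := by
    refine fun i ↦ (iSupIndep_iff_finsetSum_eq_imp_eq W).1 hW Finset.univ
      (fun i ↦ ω i ^ 2 • (orthogonalProjectionOnto (W i) g : E)) (Pi.single j w)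
      (fun i _ ↦ ⟨(W i).smul_of_tower_mem _ (coe_mem _), ?_⟩) ?_ i (Finset.mem_univ i)
    · rcases eq_or_ne i j with rfl | hij
      · simpa using hw
      · simp [hij]
    · rw [← hS, Finset.sum_pi_single', if_pos (Finset.mem_univ j), LinearEquiv.apply_symm_apply]
  have hg : (orthogonalProjectionOnto (V j) g : E) = g :=
    calc (orthogonalProjectionOnto (V j) g : E)
        = ∑ i, (orthogonalProjectionOnto (V i) (S.symm ((Pi.single j w : ι → E) i)) : E) := by
          rw [Finset.sum_eq_single j (fun i _ hij ↦ by simp [hij]) (by simp)]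
          simp [g]
      _ = g := by
          simp_rw [← hcomponents, LinearMapClass.map_smul_of_tower S.symm,
            ContinuousLinearMap.map_smul_of_tower, coe_smul_of_tower, sq]
          exact hdual g
  exact (hg ▸ coe_mem _ : g ∈ V j)

end

namespace IsFusionRieszBasis

variable {H : Type} [NormedAddCommGroup H] [InnerProductSpace ℂ H] {ι : Type}
  {W : ι → Submodule ℂ H} {ω : ι → ℝ}

theorem iSupIndep (hW : IsFusionRieszBasis W ω) : iSupIndep W := by
  classical
  obtain ⟨hω, -, C, _, hC, _, hRiesz⟩ := hW
  rw [iSupIndep_iff_finsetSum_eq_zero_imp_eq_zero]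
  intro s v hv hsum i hi
  let f : ∀ i, W i := fun i ↦
    if h : i ∈ s then ⟨(ω i)⁻¹ • v i, (W i).smul_of_tower_mem _ (hv i h)⟩ else 0
  have hf : ∀ i ∈ s, ω i • (f i : H) = v i := fun i hi ↦ by
    simp [f, hi, smul_inv_smul₀ (hω i).ne']
  have hnorms : C * ∑ j ∈ s, ‖(f j : H)‖ ^ 2 ≤ 0 := by
    simpa [Finset.sum_congr rfl hf, hsum] using (hRiesz s f).1
  have hzero : ∑ j ∈ s, ‖(f j : H)‖ ^ 2 = 0 :=
    le_antisymm (nonpos_of_mul_nonpos_right hnorms hC) (by positivity)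
  have hfi : (f i : H) = 0 := by
    simpa using (Finset.sum_eq_zero_iff_of_nonneg fun _ _ ↦ by positivity).1 hzero i hi
  rw [← hf i hi, hfi, smul_zero]

theorem iSup_eq_top [FiniteDimensional ℂ H] (hW : IsFusionRieszBasis W ω) : ⨆ i, W i = ⊤ :=
  (Submodule.closed_of_finiteDimensional _).submodule_topologicalClosure_eq.symm.trans hW.2.1

theorem isInternal [DecidableEq ι] [FiniteDimensional ℂ H] (hW : IsFusionRieszBasis W ω) :
    DirectSum.IsInternal W :=
  DirectSum.isInternal_submodule_of_iSupIndep_of_iSup_eq_top hW.iSupIndep hW.iSup_eq_top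

end IsFusionRieszBasis

theorem excess_GavrutaDual_of_fusionRieszBasis_general
    {H : Type} [NormedAddCommGroup H] [InnerProductSpace ℂ H]
    [FiniteDimensional ℂ H]
    {ι : Type} [Fintype ι]
    (W V : ι → Submodule ℂ H) (ω : ι → ℝ)
    (hW : IsFusionRieszBasis W ω)
    -- the (invertible) fusion frame operator of `W`:
    (S : H ≃L[ℂ] H)
    (hS : ∀ f : H, S f = ∑ i, ω i ^ 2 • (Submodule.orthogonalProjectionOnto (W i) f : H))
    -- `V` is a Gavruta dual of `W`: `f = ∑ᵢ ω i ω i π_{V i} S_W⁻¹ π_{W i} f`: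
    (hdual : ∀ f : H,
      ∑ i, (ω i * ω i) •
        (Submodule.orthogonalProjectionOnto (V i)
          (S.symm ((Submodule.orthogonalProjectionOnto (W i) f : H))) : H) = f)
    -- synthesis operator of `V`:
    (TV : PiLp 2 (fun i => ↥(V i)) →L[ℂ] H)
    (hTV : ∀ g : PiLp 2 (fun i => ↥(V i)), TV g = ∑ i, ω i • ((g i : H))) :
    Module.finrank ℂ (LinearMap.ker (TV : PiLp 2 (fun i => ↥(V i)) →ₗ[ℂ] H)) =
        ∑ i, Module.finrank ℂ ↥(V i ⊓ ((W i)ᗮ).map (S : H →ₗ[ℂ] H)) ∧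
      Module.finrank ℂ (LinearMap.ker (TV : PiLp 2 (fun i => ↥(V i)) →ₗ[ℂ] H)) ≤ ∑ i, Module.finrank ℂ ↥((W i)ᗮ) := by
  classical
  have hSsymm : (S : H →ₗ[ℂ] H).IsSymmetric :=
    LinearMap.isSymmetric_of_apply_eq_sum_smul_orthogonalProjectionOnto W (fun i ↦ ω i ^ 2) hS
  have hdimV : ∀ i, Module.finrank ℂ (W i) +
      Module.finrank ℂ ↥(V i ⊓ ((W i)ᗮ).map (S : H →ₗ[ℂ] H)) = Module.finrank ℂ (V i) :=
    fun i ↦ Submodule.finrank_add_finrank_inf_map_orthogonal hSsymm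
      (Submodule.map_symm_le_of_gavrutaDual hW.iSupIndep S.toLinearEquiv hS hdual i)
  have hTVsurj : Function.Surjective TV := fun f ↦
    ⟨WithLp.toLp 2 fun i ↦ ω i • Submodule.orthogonalProjectionOnto (V i)
      (S.symm (Submodule.orthogonalProjectionOnto (W i) f)),
      by simpa [hTV, smul_smul] using hdual f⟩
  have hrank :=
    LinearMap.finrank_range_add_finrank_ker (TV : PiLp 2 (fun i => ↥(V i)) →ₗ[ℂ] H)
  rw [LinearMap.range_eq_top.mpr hTVsurj, finrank_top,
    (WithLp.linearEquiv 2 ℂ (∀ i, V i)).finrank_eq, Module.finrank_pi_fintype,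
    ← hW.isInternal.sum_finrank_eq, ← Finset.sum_congr rfl fun i _ ↦ hdimV i,
    Finset.sum_add_distrib, Nat.add_left_cancel_iff] at hrank
  refine ⟨hrank, hrank ▸ Finset.sum_le_sum fun i _ ↦ ?_⟩
  calc Module.finrank ℂ ↥(V i ⊓ ((W i)ᗮ).map (S : H →ₗ[ℂ] H))
      ≤ Module.finrank ℂ ↥(((W i)ᗮ).map (S : H →ₗ[ℂ] H)) :=
        Submodule.finrank_mono inf_le_right
    _ = Module.finrank ℂ ↥((W i)ᗮ) := LinearEquiv.finrank_map_eq _ _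

/-- if `W` is a fusion Riesz basis of `H_n` and `V` is a Gavruta
dual fusion frame of `W` (with the same weights), then
`e(V) = ∑ᵢ dim (V i ∩ S_W (W i)ᗮ)`, and in particular
`0 ≤ e(V) ≤ ∑ᵢ dim (W i)ᗮ`. -/
theorem excess_GavrutaDual_of_fusionRieszBasis
    {H : Type} [NormedAddCommGroup H] [InnerProductSpace ℂ H]
    [FiniteDimensional ℂ H]
    {ι : Type} [Fintype ι]
    (W V : ι → Submodule ℂ H) (ω : ι → ℝ)
    (hW : IsFusionRieszBasis W ω)
    (hVframe : IsFusionFrame V ω)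
    -- the (invertible) fusion frame operator of `W`:
    (S : H ≃L[ℂ] H)
    (hS : ∀ f : H, S f = ∑ i, ω i ^ 2 • (Submodule.orthogonalProjectionOnto (W i) f : H))
    -- `V` is a Gavruta dual of `W`: `f = ∑ᵢ ω i ω i π_{V i} S_W⁻¹ π_{W i} f`:
    (hdual : ∀ f : H,
      ∑ i, (ω i * ω i) •
        (Submodule.orthogonalProjectionOnto (V i)
          (S.symm ((Submodule.orthogonalProjectionOnto (W i) f : H))) : H) = f)
    -- synthesis operator of `V`:
    (TV : PiLp 2 (fun i => ↥(V i)) →L[ℂ] H)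
    (hTV : ∀ g : PiLp 2 (fun i => ↥(V i)), TV g = ∑ i, ω i • ((g i : H))) :
    Module.finrank ℂ (LinearMap.ker (TV : PiLp 2 (fun i => ↥(V i)) →ₗ[ℂ] H)) =
        ∑ i, Module.finrank ℂ ↥(V i ⊓ ((W i)ᗮ).map (S : H →ₗ[ℂ] H)) ∧
      Module.finrank ℂ (LinearMap.ker (TV : PiLp 2 (fun i => ↥(V i)) →ₗ[ℂ] H)) ≤ ∑ i, Module.finrank ℂ ↥((W i)ᗮ) :=
  excess_GavrutaDual_of_fusionRieszBasis_general W V ω hW S hS hdual TV hTV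
end
end
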